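/- A c.e. subset A of ℕ is D-maximal and Type 6 if and only if A has an A-special list. -/

import Mathlib

open Set Function

/-- A set of naturals is computably enumerable (c.e.) -/
def CESet (A : Set ℕ) : Prop := REPred (· ∈ A)

/-- A set of naturals is computable -/
def ComputableSet (A : Set ℕ) : Prop := ComputablePred (· ∈ A)

/-- X ⊆* Y : X is almost contained in Y -/
def SubsetStar (X Y : Set ℕ) : Prop := (X \ Y).Finite

/-- X =* Y : X and Y differ by a finite set -/
def EqStar (X Y : Set ℕ) : Prop := (X \ Y).Finite ∧ (Y \ X).Finite

/-- G is a generating set for 𝒟(A): a countable family of c.e. sets, each disjoint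
from A, such that every c.e. set disjoint from A is almost covered by finitely many
members of G. -/
def Generates (A : Set ℕ) (G : Set (Set ℕ)) : Prop :=
  G.Countable ∧ (∀ X ∈ G, CESet X) ∧ (∀ X ∈ G, Disjoint X A) ∧
  ∀ D : Set ℕ, CESet D → Disjoint D A →
    ∃ F : Set (Set ℕ), F ⊆ G ∧ F.Finite ∧ SubsetStar D (⋃₀ F)

/-- S is simple -/
def SimpleSet (S : Set ℕ) : Prop :=
  CESet S ∧ Sᶜ.Infinite ∧ ∀ W : Set ℕ, CESet W → Disjoint W S → W.Finite

/-- A is 𝒟-maximal -/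
def DMaximal (A : Set ℕ) : Prop :=
  CESet A ∧ ∀ W : Set ℕ, CESet W → ∃ D : Set ℕ, CESet D ∧ Disjoint D A ∧
    (SubsetStar W (A ∪ D) ∨ EqStar (W ∪ A ∪ D) Set.univ)

/-- M is r-maximal -/
def RMaximal (M : Set ℕ) : Prop :=
  CESet M ∧ Mᶜ.Infinite ∧
    ∀ R : Set ℕ, ComputableSet R → (R ∩ Mᶜ).Finite ∨ (Rᶜ ∩ Mᶜ).Finite

/-- M is maximal -/
def MaximalSet (M : Set ℕ) : Prop :=
  CESet M ∧ Mᶜ.Infinite ∧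
    ∀ W : Set ℕ, CESet W → M ⊆ W → (W \ M).Finite ∨ Wᶜ.Finite

/-- B is atomless -/
def AtomlessSet (B : Set ℕ) : Prop :=
  ∀ C : Set ℕ, CESet C → B ⊆ C → Cᶜ.Infinite →
    ∃ E : Set ℕ, CESet E ∧ SubsetStar C E ∧ (E \ C).Infinite ∧ Eᶜ.Infinite

/-- A0, A1 form a Friedberg splitting of A -/
def FriedbergSplitting (A0 A1 A : Set ℕ) : Prop :=
  CESet A0 ∧ CESet A1 ∧ Disjoint A0 A1 ∧ A0 ∪ A1 = A ∧
    ∀ W : Set ℕ, CESet W → ¬ CESet (W \ A) → ¬ CESet (W \ A0) ∧ ¬ CESet (W \ A1)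

/-- E is a major subset of D -/
def MajorIn (E D : Set ℕ) : Prop :=
  CESet E ∧ CESet D ∧ E ⊆ D ∧ (D \ E).Infinite ∧
    ∀ W : Set ℕ, CESet W → SubsetStar Dᶜ W → SubsetStar Eᶜ W

/-- H is hh-simple: the lattice of c.e. supersets of H mod finite is a boolean algebra -/
def HHSimple (H : Set ℕ) : Prop :=
  CESet H ∧ Hᶜ.Infinite ∧
    ∀ W : Set ℕ, CESet W → ∃ V : Set ℕ, CESet V ∧
      EqStar ((W ∪ H) ∩ (V ∪ H)) H ∧ EqStar (W ∪ V ∪ H) Set.univ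

/-- A is strongly r-separable -/
def StronglyRSeparable (A : Set ℕ) : Prop :=
  ∀ B : Set ℕ, CESet B → Disjoint B A →
    ∃ C : Set ℕ, ComputableSet C ∧ B ⊆ C ∧ Disjoint C A ∧ (C \ B).Infinite

/-- Structure of a Type 5 generating family: D0 together with the R_i. -/
def Type5Family (D0 : Set ℕ) (R : ℕ → Set ℕ) : Prop :=
  CESet D0 ∧ ¬ ComputableSet D0 ∧ D0.Infinite ∧
  Function.Injective R ∧ (∀ i, D0 ≠ R i) ∧
  (∀ i, ComputableSet (R i) ∧ (R i).Infinite) ∧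
  Pairwise (Function.onFun Disjoint R) ∧
  (∀ i, Disjoint D0 (R i))

/-- Structure of a Type 7 generating family: D0 together with the R_i. -/
def Type7Family (D0 : Set ℕ) (R : ℕ → Set ℕ) : Prop :=
  CESet D0 ∧ ¬ ComputableSet D0 ∧
  Function.Injective R ∧ (∀ i, D0 ≠ R i) ∧
  (∀ i, ComputableSet (R i) ∧ (R i).Infinite) ∧
  Pairwise (Function.onFun Disjoint R) ∧
  {i : ℕ | (D0 ∩ R i).Nonempty}.Infinite

/-- Structure of a Type 8 generating family: the D_i together with the R_i. -/
def Type8Family (D R : ℕ → Set ℕ) : Prop :=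
  Function.Injective D ∧ Function.Injective R ∧ (∀ i j, D i ≠ R j) ∧
  (∀ i, CESet (D i) ∧ ¬ ComputableSet (D i)) ∧
  Pairwise (Function.onFun Disjoint D) ∧
  (∀ i, ComputableSet (R i) ∧ (R i).Infinite) ∧
  Pairwise (Function.onFun Disjoint R)

/-- Structure of a Type 9 generating family: the nested D_i together with the R_i. -/
def Type9Family (D R : ℕ → Set ℕ) : Prop :=
  Function.Injective R ∧ (∀ i j, D i ≠ R j) ∧
  (∀ i, ComputableSet (R i) ∧ (R i).Infinite) ∧
  Pairwise (Function.onFun Disjoint R) ∧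
  (∀ i, CESet (D i) ∧ ¬ ComputableSet (D i) ∧ (D i).Infinite) ∧
  (∀ l, D l ⊆ D (l + 1)) ∧
  (∀ l, ¬ CESet (D (l + 1) \ D l)) ∧
  (∀ l, {j : ℕ | (R j \ D l).Infinite}.Infinite)

def IsType1 (G : Set (Set ℕ)) : Prop := G = {∅}

def IsType2 (G : Set (Set ℕ)) : Prop :=
  ∃ R : Set ℕ, G = {R} ∧ ComputableSet R ∧ R.Infinite

def IsType3 (G : Set (Set ℕ)) : Prop :=
  ∃ W : Set ℕ, G = {W} ∧ CESet W ∧ ¬ ComputableSet W ∧ W.Infinite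

def IsType4 (G : Set (Set ℕ)) : Prop :=
  ∃ R : ℕ → Set ℕ, G = Set.range R ∧ Function.Injective R ∧
    (∀ i, ComputableSet (R i) ∧ (R i).Infinite) ∧
    Pairwise (Function.onFun Disjoint R)

def IsType5 (G : Set (Set ℕ)) : Prop :=
  ∃ (D0 : Set ℕ) (R : ℕ → Set ℕ), G = insert D0 (Set.range R) ∧ Type5Family D0 R

def IsType6 (G : Set (Set ℕ)) : Prop :=
  ∃ D : ℕ → Set ℕ, G = Set.range D ∧ Function.Injective D ∧
    (∀ i, CESet (D i) ∧ ¬ ComputableSet (D i) ∧ (D i).Infinite) ∧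
    Pairwise (Function.onFun Disjoint D)

def IsType7 (G : Set (Set ℕ)) : Prop :=
  ∃ (D0 : Set ℕ) (R : ℕ → Set ℕ), G = insert D0 (Set.range R) ∧ Type7Family D0 R

def IsType8 (G : Set (Set ℕ)) : Prop :=
  ∃ D R : ℕ → Set ℕ, G = Set.range D ∪ Set.range R ∧ Type8Family D R

def IsType9 (G : Set (Set ℕ)) : Prop :=
  ∃ D R : ℕ → Set ℕ, G = Set.range D ∪ Set.range R ∧ Type9Family D R

def IsType10 (G : Set (Set ℕ)) : Prop :=
  ∃ D : ℕ → Set ℕ, G = Set.range D ∧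
    (∀ i, CESet (D i) ∧ ¬ ComputableSet (D i) ∧ (D i).Infinite) ∧
    (∀ l, D l ⊆ D (l + 1)) ∧
    (∀ l, ¬ CESet (D (l + 1) \ D l))

/-- G is a generating set of Type n (n = 1, …, 10). -/
def GenTypeN (n : ℕ) (G : Set (Set ℕ)) : Prop :=
  match n with
  | 1 => IsType1 G
  | 2 => IsType2 G
  | 3 => IsType3 G
  | 4 => IsType4 G
  | 5 => IsType5 G
  | 6 => IsType6 G
  | 7 => IsType7 G
  | 8 => IsType8 G
  | 9 => IsType9 G
  | 10 => IsType10 G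
  | _ => False

/-- The c.e. set A is of Type n: 𝒟(A) has a generating set of Type n
but no generating set of any Type m < n. -/
def SetOfType (A : Set ℕ) (n : ℕ) : Prop :=
  (∃ G : Set (Set ℕ), Generates A G ∧ GenTypeN n G) ∧
  ∀ m : ℕ, m < n → ¬ ∃ G : Set (Set ℕ), Generates A G ∧ GenTypeN m G

/-- (F_i) is an A-special list. -/
def ASpecialList (A : Set ℕ) (F : ℕ → Set ℕ) : Prop :=
  F 0 = A ∧ (∀ i, CESet (F i) ∧ ¬ ComputableSet (F i)) ∧
  Pairwise (Function.onFun Disjoint F) ∧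
  ∀ W : Set ℕ, CESet W → ∃ i : ℕ,
    SubsetStar W (⋃ l ≤ i, F l) ∨ EqStar (W ∪ ⋃ l ≤ i, F l) Set.univ

/-!
If `(F_i)` is an `A`-special list, the tail `F_1, F_2, …` generates `𝒟(A)`: a c.e. set `W`
disjoint from `A` is almost contained in some `F_0 ∪ … ∪ F_i`, since otherwise `Wᶜ` would be a
co-c.e. set squeezed between `A` and `F_0 ∪ … ∪ F_i`, and such a squeeze makes `A` co-c.e.
The same squeeze rules out generating sets of Types 1–5: each has at most one noncomputable
member `D₀`, which lies almost inside some `F_0 ∪ … ∪ F_a`, so `F_{a+1}` would be almost equal to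
a computable set minus finitely many of the `F_l` and hence computable. Conversely, a Type 6
generating set `D_0, D_1, …` of a 𝒟-maximal set `A` gives the special list `A, D_0, D_1, …`,
where `A` is noncomputable because a computable `A` has a generating set of Type 1 or 2.
-/

section AlmostInclusion

variable {X Y Z : Set ℕ}

theorem SubsetStar.of_subset (h : X ⊆ Y) : SubsetStar X Y := by
  simp [SubsetStar, sdiff_eq_empty.2 h]

theorem SubsetStar.trans (hXY : SubsetStar X Y) (hYZ : SubsetStar Y Z) : SubsetStar X Z :=
  (hXY.union hYZ).subset fun x hx => by
    by_cases hy : x ∈ Y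
    · exact Or.inr ⟨hy, hx.2⟩
    · exact Or.inl ⟨hx.1, hy⟩

theorem SubsetStar.union_left (h : SubsetStar X Y) (Z : Set ℕ) :
    SubsetStar (Z ∪ X) (Z ∪ Y) :=
  h.subset fun _ hx => ⟨hx.1.resolve_left fun hz => hx.2 (Or.inl hz), fun hy => hx.2 (Or.inr hy)⟩

theorem SubsetStar.of_union_of_disjoint (h : SubsetStar X (Z ∪ Y)) (hXZ : Disjoint X Z) :
    SubsetStar X Y :=
  h.subset fun _ hx => ⟨hx.1, fun hzy => hzy.elim (disjoint_left.1 hXZ hx.1) hx.2⟩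

theorem eqStar_univ_iff : EqStar X univ ↔ Xᶜ.Finite := by
  simp [EqStar, compl_eq_univ_sdiff]

theorem EqStar.univ_of_subsetStar (h : EqStar X univ) (hXY : SubsetStar X Y) : EqStar Y univ := by
  rw [eqStar_univ_iff] at h ⊢
  refine (h.union hXY).subset fun x hx => ?_
  by_cases hX : x ∈ X
  · exact Or.inr ⟨hX, hx⟩
  · exact Or.inl hX

theorem Set.Finite.sUnion_induction {α : Type*} {p : Set α → Prop} {Fam : Set (Set α)}
    (hFam : Fam.Finite) (empty : p ∅) (union : ∀ X Y, p X → p Y → p (X ∪ Y))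
    (h : ∀ X ∈ Fam, p X) : p (⋃₀ Fam) := by
  rw [← hFam.coe_toFinset, ← Finset.sup_id_set_eq_sUnion]
  exact Finset.sup_induction empty (fun X hX Y hY => union X Y hX hY) (by simpa using h)

theorem exists_sUnion_subsetStar {V : ℕ → Set ℕ} (hV : Monotone V) {Fam : Set (Set ℕ)}
    (hFam : Fam.Finite) (h : ∀ X ∈ Fam, ∃ i, SubsetStar X (V i)) :
    ∃ m, SubsetStar (⋃₀ Fam) (V m) := by
  refine hFam.sUnion_induction ⟨0, .of_subset (empty_subset _)⟩ ?_ h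
  rintro X Y ⟨i, hi⟩ ⟨j, hj⟩
  refine ⟨max i j, ?_⟩
  rw [SubsetStar, union_sdiff_distrib]
  exact (hi.trans (.of_subset (hV (le_max_left i j)))).union
    (hj.trans (.of_subset (hV (le_max_right i j))))

end AlmostInclusion

theorem accumulate_succ_eq_union_accumulate_tail {α : Type*} (F : ℕ → Set α) (i : ℕ) :
    accumulate F (i + 1) = F 0 ∪ accumulate (fun k => F (k + 1)) i := by
  ext x
  simp only [mem_accumulate, mem_union]
  constructor
  · rintro ⟨_ | k, hk, hx⟩
    · exact Or.inl hx
    · exact Or.inr ⟨k, by omega, hx⟩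
  · rintro (hx | ⟨k, hk, hx⟩)
    · exact ⟨0, by omega, hx⟩
    · exact ⟨k + 1, by omega, hx⟩

theorem Pairwise.injective_of_nonempty {α ι : Type*} {D : ι → Set α}
    (hd : Pairwise (Disjoint on D)) (hne : ∀ i, (D i).Nonempty) : Injective D := by
  intro a b hab
  by_contra h
  have hself := hd h
  rw [onFun, hab] at hself
  exact (hne b).ne_empty (disjoint_self.1 hself)

section Computability

theorem REPred.or {p q : ℕ → Prop} (hp : REPred p) (hq : REPred q) :
    REPred fun a => p a ∨ q a := by
  obtain ⟨k, hk, H⟩ := Partrec.merge' hp hq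
  refine hk.dom_re.of_eq fun a => ?_
  rw [(H a).2]
  simp [Part.assert]

theorem REPred.and {p q : ℕ → Prop} (hp : REPred p) (hq : REPred q) :
    REPred fun a => p a ∧ q a := by
  have h : Partrec fun a => (Part.assert (p a) fun _ => Part.some ()).bind
      fun _ => Part.assert (q a) fun _ => Part.some () :=
    hp.bind (hq.comp Computable.fst)
  exact h.dom_re.of_eq fun a =>
    ⟨fun ⟨h1, h2⟩ => ⟨h1.1, h2.1⟩, fun ⟨h1, h2⟩ => ⟨⟨h1, trivial⟩, h2, trivial⟩⟩

variable {X Y : Set ℕ}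

theorem CESet.union (hX : CESet X) (hY : CESet Y) : CESet (X ∪ Y) :=
  REPred.or hX hY

theorem CESet.inter (hX : CESet X) (hY : CESet Y) : CESet (X ∩ Y) :=
  REPred.and hX hY

theorem ComputableSet.ceSet (h : ComputableSet X) : CESet X :=
  ComputablePred.to_re h

theorem ComputableSet.compl (h : ComputableSet X) : ComputableSet Xᶜ :=
  ComputablePred.not h

theorem ComputableSet.ceSet_compl (h : ComputableSet X) : CESet Xᶜ :=
  h.compl.ceSet

theorem ComputableSet.of_ceSet_compl (hX : CESet X) (hXc : CESet Xᶜ) : ComputableSet X :=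
  ComputablePred.computable_iff_re_compl_re'.2 ⟨hX, hXc⟩

theorem ComputableSet.union (hX : ComputableSet X) (hY : ComputableSet Y) :
    ComputableSet (X ∪ Y) := by
  refine .of_ceSet_compl (hX.ceSet.union hY.ceSet) ?_
  rw [compl_union]
  exact hX.ceSet_compl.inter hY.ceSet_compl

theorem computableSet_empty : ComputableSet (∅ : Set ℕ) :=
  ComputablePred.computable_iff.2 ⟨fun _ => false, Computable.const false, by ext; simp⟩

theorem computableSet_singleton (a : ℕ) : ComputableSet ({a} : Set ℕ) :=
  ComputablePred.computable_iff.2 ⟨fun n => decide (n = a),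
    (Primrec.eq.comp Primrec.id (Primrec.const a)).decide.to_comp, by ext; simp⟩

theorem ComputableSet.sUnion {Fam : Set (Set ℕ)} (hFam : Fam.Finite)
    (h : ∀ X ∈ Fam, ComputableSet X) : ComputableSet (⋃₀ Fam) :=
  hFam.sUnion_induction computableSet_empty (fun _ _ => .union) h

theorem Set.Finite.computableSet (h : X.Finite) : ComputableSet X := by
  rw [← biUnion_of_singleton X, ← sUnion_image]
  exact .sUnion (h.image _) (forall_mem_image.2 fun a _ => computableSet_singleton a)

theorem infinite_of_not_computableSet (h : ¬ ComputableSet X) : X.Infinite :=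
  fun hfin => h hfin.computableSet

theorem CESet.sUnion {Fam : Set (Set ℕ)} (hFam : Fam.Finite) (h : ∀ X ∈ Fam, CESet X) :
    CESet (⋃₀ Fam) :=
  hFam.sUnion_induction computableSet_empty.ceSet (fun _ _ => .union) h

theorem CESet.biUnion {s : Set ℕ} (hs : s.Finite) {F : ℕ → Set ℕ} (h : ∀ l ∈ s, CESet (F l)) :
    CESet (⋃ l ∈ s, F l) := by
  rw [← sUnion_image]
  exact .sUnion (hs.image F) (forall_mem_image.2 h)

theorem CESet.accumulate {F : ℕ → Set ℕ} (h : ∀ l, CESet (F l)) (i : ℕ) :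
    CESet (accumulate F i) :=
  CESet.biUnion (finite_Iic i) fun l _ => h l

theorem CESet.of_eqStar (hY : CESet Y) (h : EqStar X Y) : CESet X := by
  have hX : X = Y ∩ (Y \ X)ᶜ ∪ (X \ Y) := by
    ext x; by_cases x ∈ X <;> by_cases x ∈ Y <;> simp [*]
  rw [hX]
  exact (hY.inter h.2.computableSet.ceSet_compl).union h.1.computableSet.ceSet

end Computability

/-- Up to finitely many elements, `(F n)ᶜ` is `Uᶜ` together with the `F l` for `l ≤ M`, `l ≠ n`. -/
theorem ceSet_compl_of_subsetStar_accumulate {F : ℕ → Set ℕ} (hce : ∀ l, CESet (F l))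
    (hd : Pairwise (Disjoint on F)) {n M : ℕ} {U : Set ℕ} (hU : CESet Uᶜ)
    (hFU : SubsetStar (F n) U) (hUF : SubsetStar U (accumulate F M)) : CESet (F n)ᶜ := by
  set E := ⋃ l ∈ Iic M \ {n}, F l
  have hE : CESet E := .biUnion (finite_Iic M).sdiff fun l _ => hce l
  refine (hU.union hE).of_eqStar ⟨hUF.subset ?_, hFU.subset ?_⟩
  · rintro x ⟨hxn, hxUE⟩
    refine ⟨not_not.1 fun hxU => hxUE (Or.inl hxU), fun hxF => ?_⟩
    obtain ⟨l, hl, hxl⟩ := mem_accumulate.1 hxF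
    have hln : l ≠ n := fun h => hxn (h ▸ hxl)
    exact hxUE (Or.inr (mem_biUnion ⟨hl, hln⟩ hxl))
  · rintro x ⟨hxUE, hxn⟩
    replace hxn : x ∈ F n := by simpa using hxn
    refine ⟨hxn, fun hxU => ?_⟩
    obtain hxU' | hxE := hxUE
    · exact hxU' hxU
    · obtain ⟨l, ⟨-, hln⟩, hxl⟩ := mem_iUnion₂.1 hxE
      exact disjoint_left.1 (hd hln) hxl hxn

theorem generates_singleton {A X : Set ℕ} (hX : CESet X) (hXA : Disjoint X A)
    (hAX : SubsetStar Aᶜ X) : Generates A {X} := by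
  refine ⟨countable_singleton X, by simpa using hX, by simpa using hXA, fun D _ hDA => ?_⟩
  refine ⟨{X}, subset_rfl, finite_singleton X, ?_⟩
  rw [sUnion_singleton]
  exact (SubsetStar.of_subset hDA.subset_compl_right).trans hAX

theorem SetOfType.not_computableSet {A : Set ℕ} {n : ℕ} (h : SetOfType A n) (hn : 2 < n) :
    ¬ ComputableSet A := by
  intro hA
  by_cases hfin : Aᶜ.Finite
  · refine h.2 1 (by omega) ⟨{∅}, generates_singleton computableSet_empty.ceSet ?_ ?_, rfl⟩
    · exact empty_disjoint A
    · simpa [SubsetStar] using hfin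
  · exact h.2 2 (by omega) ⟨{Aᶜ}, generates_singleton hA.ceSet_compl disjoint_compl_left
      (.of_subset subset_rfl), Aᶜ, rfl, hA.compl, hfin⟩

theorem GenTypeN.exists_forall_ne_computableSet {m : ℕ} {G : Set (Set ℕ)} (hm : m < 6)
    (h : GenTypeN m G) : ∃ D₀ ∈ G, ∀ X ∈ G, X ≠ D₀ → ComputableSet X := by
  have hsingleton (D₀ : Set ℕ) (hG : G = {D₀}) : ∃ D₀ ∈ G, ∀ X ∈ G, X ≠ D₀ → ComputableSet X :=
    ⟨D₀, hG ▸ rfl, fun X hX hne => absurd (by rwa [hG] at hX) hne⟩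
  interval_cases m
  · exact h.elim
  · exact hsingleton ∅ h
  · obtain ⟨R, hG, -⟩ := (h : IsType2 G)
    exact hsingleton R hG
  · obtain ⟨W, hG, -⟩ := (h : IsType3 G)
    exact hsingleton W hG
  · obtain ⟨R, rfl, -, hR, -⟩ := (h : IsType4 G)
    exact ⟨R 0, mem_range_self 0, forall_mem_range.2 fun k _ => (hR k).1⟩
  · obtain ⟨D₀, R, rfl, -, -, -, -, -, hR, -⟩ := (h : IsType5 G)
    refine ⟨D₀, mem_insert D₀ _, ?_⟩
    rintro X (rfl | ⟨k, rfl⟩) hne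
    · exact absurd rfl hne
    · exact (hR k).1

theorem Generates.exists_subsetStar_accumulate {A E : Set ℕ} {D : ℕ → Set ℕ}
    (hG : Generates A (range D)) (hE : CESet E) (hEA : Disjoint E A) :
    ∃ i, SubsetStar E (accumulate D i) := by
  obtain ⟨Fam, hFamG, hFam, hEFam⟩ := hG.2.2.2 E hE hEA
  obtain ⟨i, hi⟩ := exists_sUnion_subsetStar monotone_accumulate hFam fun X hX => by
    obtain ⟨k, rfl⟩ := hFamG hX
    exact ⟨k, .of_subset subset_accumulate⟩
  exact ⟨i, hEFam.trans hi⟩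

theorem DMaximal.aSpecialList_cons {A : Set ℕ} {D : ℕ → Set ℕ} (hA : DMaximal A)
    (hAc : ¬ ComputableSet A) (hD : ∀ i, CESet (D i) ∧ ¬ ComputableSet (D i))
    (hd : Pairwise (Disjoint on D)) (hG : Generates A (range D)) :
    ASpecialList A (Stream'.cons A D) := by
  refine ⟨rfl, fun | 0 => ⟨hA.1, hAc⟩ | k + 1 => hD k, ?_, fun W hW => ?_⟩
  · rintro (_ | k) (_ | l) hkl
    · exact absurd rfl hkl
    · exact (hG.2.2.1 _ (mem_range_self l)).symm
    · exact hG.2.2.1 _ (mem_range_self k)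
    · exact hd fun h => hkl (congrArg _ h)
  obtain ⟨E, hE, hEA, hcase⟩ := hA.2 W hW
  obtain ⟨i, hi⟩ := hG.exists_subsetStar_accumulate hE hEA
  have hAE : SubsetStar (A ∪ E) (accumulate (Stream'.cons A D) (i + 1)) :=
    (hi.union_left A).trans <|
      .of_subset (accumulate_succ_eq_union_accumulate_tail (Stream'.cons A D) i).ge
  refine ⟨i + 1, hcase.imp (·.trans hAE) (·.univ_of_subsetStar ?_)⟩
  rw [union_assoc]
  exact hAE.union_left W

namespace ASpecialList

variable {A : Set ℕ} {F : ℕ → Set ℕ}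

theorem ceSet (hF : ASpecialList A F) (i : ℕ) : CESet (F i) := (hF.2.1 i).1

theorem not_computableSet (hF : ASpecialList A F) (i : ℕ) : ¬ ComputableSet (F i) :=
  (hF.2.1 i).2

theorem pairwise_disjoint (hF : ASpecialList A F) : Pairwise (Disjoint on F) := hF.2.2.1

theorem disjoint_of_ne_zero (hF : ASpecialList A F) {i : ℕ} (hi : i ≠ 0) : Disjoint (F i) A :=
  hF.1 ▸ hF.pairwise_disjoint hi

theorem not_subsetStar_accumulate (hF : ASpecialList A F) {n M : ℕ} {U : Set ℕ}
    (hU : CESet Uᶜ) (hFU : SubsetStar (F n) U) : ¬ SubsetStar U (accumulate F M) :=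
  fun hUF => hF.not_computableSet n <| .of_ceSet_compl (hF.ceSet n) <|
    ceSet_compl_of_subsetStar_accumulate hF.ceSet hF.pairwise_disjoint hU hFU hUF

theorem exists_subsetStar_accumulate (hF : ASpecialList A F) {W : Set ℕ} (hW : CESet W)
    (hWA : Disjoint W A) : ∃ i, SubsetStar W (accumulate F i) := by
  obtain ⟨i, hsub | hcofin⟩ := hF.2.2.2 W hW
  · exact ⟨i, hsub⟩
  have hWc : SubsetStar Wᶜ (accumulate F i) :=
    (eqStar_univ_iff.1 hcofin).subset fun x hx hx' => hx'.elim hx.1 hx.2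
  exact absurd hWc <| hF.not_subsetStar_accumulate (n := 0) (by rwa [compl_compl])
    (.of_subset (hF.1 ▸ hWA.subset_compl_left))

theorem generates_tail (hF : ASpecialList A F) : Generates A (range fun k => F (k + 1)) := by
  refine ⟨countable_range _, forall_mem_range.2 fun k => hF.ceSet (k + 1),
    forall_mem_range.2 fun k => hF.disjoint_of_ne_zero k.succ_ne_zero, fun E hE hEA => ?_⟩
  obtain ⟨i, hi⟩ := hF.exists_subsetStar_accumulate hE hEA
  refine ⟨(fun k => F (k + 1)) '' Iic i, image_subset_range _ _, (finite_Iic i).image _, ?_⟩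
  rw [sUnion_image]
  change SubsetStar E (accumulate (fun k => F (k + 1)) i)
  refine SubsetStar.of_union_of_disjoint (Z := F 0) ?_ (hF.1 ▸ hEA)
  rw [← accumulate_succ_eq_union_accumulate_tail]
  exact hi.trans (.of_subset (monotone_accumulate (Nat.le_succ i)))

theorem dMaximal (hF : ASpecialList A F) : DMaximal A := by
  refine ⟨hF.1 ▸ hF.ceSet 0, fun W hW => ?_⟩
  obtain ⟨i, hcase⟩ := hF.2.2.2 W hW
  refine ⟨accumulate (fun k => F (k + 1)) i, .accumulate (fun k => hF.ceSet (k + 1)) i, ?_, ?_⟩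
  · exact disjoint_left.2 fun x hx => (mem_accumulate.1 hx).elim fun k ⟨_, hxk⟩ =>
      disjoint_left.1 (hF.disjoint_of_ne_zero k.succ_ne_zero) hxk
  have hsub : accumulate F i ⊆ A ∪ accumulate (fun k => F (k + 1)) i := by
    rw [← hF.1, ← accumulate_succ_eq_union_accumulate_tail]
    exact monotone_accumulate (Nat.le_succ i)
  rw [union_assoc]
  exact hcase.imp (·.trans (.of_subset hsub))
    (·.univ_of_subsetStar (.of_subset (union_subset_union_right W hsub)))

theorem isType6_tail (hF : ASpecialList A F) : IsType6 (range fun k => F (k + 1)) := by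
  have hinf (k : ℕ) : (F (k + 1)).Infinite :=
    infinite_of_not_computableSet (hF.not_computableSet _)
  have hd : Pairwise (Disjoint on fun k => F (k + 1)) :=
    hF.pairwise_disjoint.comp_of_injective Nat.succ_injective
  exact ⟨_, rfl, hd.injective_of_nonempty fun k => (hinf k).nonempty,
    fun k => ⟨hF.ceSet _, hF.not_computableSet _, hinf k⟩, hd⟩

theorem not_generates (hF : ASpecialList A F) {G : Set (Set ℕ)} (hG : Generates A G)
    {D₀ : Set ℕ} (hD₀ : D₀ ∈ G) (hGc : ∀ X ∈ G, X ≠ D₀ → ComputableSet X) : False := by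
  obtain ⟨-, hGce, hGA, hcover⟩ := hG
  obtain ⟨a, ha⟩ := hF.exists_subsetStar_accumulate (hGce D₀ hD₀) (hGA D₀ hD₀)
  obtain ⟨Fam, hFamG, hFam, hFa⟩ :=
    hcover (F (a + 1)) (hF.ceSet _) (hF.disjoint_of_ne_zero a.succ_ne_zero)
  have hU : ComputableSet (⋃₀ (Fam \ {D₀})) :=
    .sUnion hFam.sdiff fun X hX => hGc X (hFamG hX.1) hX.2
  have hFU : SubsetStar (F (a + 1)) (⋃₀ (Fam \ {D₀})) := by
    refine (hFa.union ha).subset fun x ⟨hxF, hxU⟩ => ?_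
    by_cases hx : x ∈ ⋃₀ Fam
    · obtain ⟨Y, hY, hxY⟩ := hx
      obtain rfl : Y = D₀ := not_not.1 fun hne => hxU ⟨Y, ⟨hY, hne⟩, hxY⟩
      have hdisj := disjoint_accumulate hF.pairwise_disjoint a.lt_succ_self
      exact Or.inr ⟨hxY, disjoint_right.1 hdisj hxF⟩
    · exact Or.inl ⟨hxF, hx⟩
  obtain ⟨m, hUm⟩ := exists_sUnion_subsetStar monotone_accumulate hFam.sdiff fun X hX =>
    hF.exists_subsetStar_accumulate (hGce X (hFamG hX.1)) (hGA X (hFamG hX.1))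
  exact hF.not_subsetStar_accumulate hU.ceSet_compl hFU hUm

end ASpecialList

theorem ASpecialList.setOfType_six {A : Set ℕ} {F : ℕ → Set ℕ} (hF : ASpecialList A F) :
    SetOfType A 6 := by
  refine ⟨⟨_, hF.generates_tail, hF.isType6_tail⟩, fun m hm ⟨G, hG, hmG⟩ => ?_⟩
  obtain ⟨D₀, hD₀, hGc⟩ := hmG.exists_forall_ne_computableSet hm
  exact hF.not_generates hG hD₀ hGc

theorem stmt_18_general (A : Set ℕ) :
    (DMaximal A ∧ SetOfType A 6) ↔ ∃ F : ℕ → Set ℕ, ASpecialList A F := by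
  constructor
  · rintro ⟨hA, hType⟩
    obtain ⟨_, hG, D, rfl, -, hD, hd⟩ := hType.1
    exact ⟨_, hA.aSpecialList_cons (hType.not_computableSet (by norm_num))
      (fun i => ⟨(hD i).1, (hD i).2.1⟩) hd hG⟩
  · rintro ⟨F, hF⟩
    exact ⟨hF.dMaximal, hF.setOfType_six⟩

theorem stmt_18 (A : Set ℕ) (hA : CESet A) :
    (DMaximal A ∧ SetOfType A 6) ↔ ∃ F : ℕ → Set ℕ, ASpecialList A F :=
  stmt_18_general A
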